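/- Under the standing hypotheses (including Atkinson definiteness on ⁺[k₀,ℓ]), let Φ(z,·) be the fundamental solution with initial value Φ̂(z,k₀) = I_ρ(k₀)^{-1/2}Jα*, and let β satisfy ββ*=I_m, βJβ*=0, Im(β₁β₂*)=0. Then for z ∈ ℂ∖ℝ and ℓ ≠ k₀, the matrix β̃Φ̂(z,ℓ) is invertible; equivalently, β̃Φ̂(z,ℓ) can be singular only for real z. -/

import Mathlib

open Matrix ComplexOrder

/-- The standard 2m×2m symplectic matrix J = [[0, I], [-I, 0]]. -/
def Jmat (m : ℕ) : Matrix (Fin m ⊕ Fin m) (Fin m ⊕ Fin m) ℂ :=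
  Matrix.fromBlocks 0 1 (-1) 0

/-- The positive semidefinite square root of a positive semidefinite matrix
(removed from Mathlib; restored with its old definition). -/
noncomputable def Matrix.PosSemidef.sqrt {n 𝕜 : Type*} [Fintype n] [DecidableEq n] [RCLike 𝕜]
    {A : Matrix n n 𝕜} (hA : A.PosSemidef) : Matrix n n 𝕜 :=
  hA.1.eigenvectorUnitary.1 * diagonal ((↑) ∘ (√·) ∘ hA.1.eigenvalues) *
  (star hA.1.eigenvectorUnitary : Matrix n n 𝕜)

lemma psd_sqrt_herm {n 𝕜 : Type*} [Fintype n] [DecidableEq n] [RCLike 𝕜]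
    {A : Matrix n n 𝕜} (hA : A.PosSemidef) : hA.sqrtᴴ = hA.sqrt := by
  simp only [Matrix.PosSemidef.sqrt, Matrix.conjTranspose_mul, diagonal_conjTranspose,
    Matrix.mul_assoc]
  congr 2
  · ext i j
    simp
  · congr 1
    funext i
    simp

lemma psd_sqrt_mul_self {n 𝕜 : Type*} [Fintype n] [DecidableEq n] [RCLike 𝕜]
    {A : Matrix n n 𝕜} (hA : A.PosSemidef) : hA.sqrt * hA.sqrt = A := by
  have hU : (star hA.1.eigenvectorUnitary : Matrix n n 𝕜) * hA.1.eigenvectorUnitary.1 = 1 :=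
    Unitary.coe_star_mul_self _
  have hD : diagonal ((↑) ∘ (√·) ∘ hA.1.eigenvalues) * diagonal ((↑) ∘ (√·) ∘ hA.1.eigenvalues)
      = (diagonal (RCLike.ofReal ∘ hA.1.eigenvalues) : Matrix n n 𝕜) := by
    rw [diagonal_mul_diagonal]
    congr 1
    funext i
    simp only [Function.comp_apply, ← RCLike.ofReal_mul]
    rw [Real.mul_self_sqrt (hA.eigenvalues_nonneg i)]
  calc hA.sqrt * hA.sqrt
      = hA.1.eigenvectorUnitary.1 * (diagonal ((↑) ∘ (√·) ∘ hA.1.eigenvalues) *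
        ((star hA.1.eigenvectorUnitary : Matrix n n 𝕜) * hA.1.eigenvectorUnitary.1) *
        diagonal ((↑) ∘ (√·) ∘ hA.1.eigenvalues)) *
        (star hA.1.eigenvectorUnitary : Matrix n n 𝕜) := by
          simp only [Matrix.PosSemidef.sqrt, Matrix.mul_assoc]
    _ = A := by
      rw [hU, Matrix.mul_one, hD]
      conv_rhs => rw [hA.1.spectral_theorem]
      rw [Unitary.conjStarAlgAut_apply]

lemma Jmat_conjT (m : ℕ) : (Jmat m)ᴴ = -Jmat m := by
  ext (i | i) (j | j) <;> simp [Jmat, fromBlocks, Matrix.one_apply, eq_comm]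

lemma Jmat_mul_Jmat (m : ℕ) : Jmat m * Jmat m = -1 := by
  ext (i | i) (j | j) <;> simp [Jmat, fromBlocks_multiply, fromBlocks, Matrix.one_apply, mul_apply]

lemma JhJJ (m : ℕ) : (Jmat m)ᴴ * Jmat m * Jmat m = Jmat m := by
  rw [Jmat_conjT, Matrix.neg_mul, Matrix.neg_mul, Matrix.mul_assoc, Jmat_mul_Jmat]
  simp

lemma quadJ {m : ℕ} (a b : Matrix (Fin m) (Fin 1) ℂ) :
    (fromRows a b)ᴴ * Jmat m * fromRows a b = aᴴ * b - bᴴ * a := by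
  rw [conjTranspose_fromRows_eq_fromCols_conjTranspose, Jmat, Matrix.mul_assoc,
    fromBlocks_mul_fromRows, fromCols_mul_fromRows]
  simp [sub_eq_add_neg, Matrix.mul_neg]

lemma sandwichJ {m : ℕ} (γ : Matrix (Fin m) (Fin m ⊕ Fin m) ℂ)
    (hγ : γ * Jmat m * γᴴ = 0) (c : Matrix (Fin m) (Fin 1) ℂ) :
    (Jmat m * (γᴴ * c))ᴴ * Jmat m * (Jmat m * (γᴴ * c)) = 0 := by
  have : (Jmat m * (γᴴ * c))ᴴ * Jmat m * (Jmat m * (γᴴ * c))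
      = cᴴ * (γ * ((Jmat m)ᴴ * Jmat m * Jmat m) * γᴴ) * c := by
    simp only [Matrix.conjTranspose_mul, conjTranspose_conjTranspose, Matrix.mul_assoc]
  rw [this, JhJJ, hγ]
  simp

lemma ker_quadJ {m : ℕ} (β : Matrix (Fin m) (Fin m ⊕ Fin m) ℂ)
    (hβ1 : β * βᴴ = 1) (hβ2 : β * Jmat m * βᴴ = 0)
    (x : Matrix (Fin m ⊕ Fin m) (Fin 1) ℂ) (hx : β * x = 0) :
    xᴴ * Jmat m * x = 0 := by
  set T : Matrix (Fin m ⊕ Fin m) (Fin m ⊕ Fin m) ℂ := fromRows β (β * (Jmat m)ᴴ) with hT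
  have hTTh : T * Tᴴ = 1 := by
    rw [hT, conjTranspose_fromRows_eq_fromCols_conjTranspose, fromRows_mul_fromCols]
    have e2 : β * (β * (Jmat m)ᴴ)ᴴ = 0 := by
      rw [Matrix.conjTranspose_mul, conjTranspose_conjTranspose, ← Matrix.mul_assoc, hβ2]
    have e3 : β * (Jmat m)ᴴ * βᴴ = 0 := by
      rw [Jmat_conjT]
      simp only [Matrix.mul_neg, Matrix.neg_mul]
      rw [hβ2, neg_zero]
    have e4 : β * (Jmat m)ᴴ * (β * (Jmat m)ᴴ)ᴴ = 1 := by
      rw [Matrix.conjTranspose_mul, conjTranspose_conjTranspose, Jmat_conjT]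
      simp only [Matrix.mul_neg, Matrix.neg_mul, neg_neg]
      rw [Matrix.mul_assoc β (Jmat m), ← Matrix.mul_assoc (Jmat m), Jmat_mul_Jmat]
      simp [hβ1]
    rw [hβ1, e2, e3, e4, fromBlocks_one]
  have hThT : Tᴴ * T = 1 := mul_eq_one_comm.mp hTTh
  have h1 : βᴴ * (0 : Matrix (Fin m) (Fin 1) ℂ) + (β * (Jmat m)ᴴ)ᴴ * (β * (Jmat m)ᴴ * x) = x := by
    have : Tᴴ * (T * x) = x := by rw [← Matrix.mul_assoc, hThT, Matrix.one_mul]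
    rw [hT, fromRows_mul, hx, conjTranspose_fromRows_eq_fromCols_conjTranspose,
      fromCols_mul_fromRows] at this
    exact this
  rw [Matrix.conjTranspose_mul, conjTranspose_conjTranspose] at h1
  have hxeq : x = Jmat m * (βᴴ * (β * (Jmat m)ᴴ * x)) := by
    conv_lhs => rw [← h1]
    rw [Matrix.mul_zero, zero_add, Matrix.mul_assoc]
  rw [hxeq]
  exact sandwichJ β hβ2 _

lemma telW (W : ℤ → Matrix (Fin 1) (Fin 1) ℂ) (a b : ℤ) (h : a ≤ b) :
    ∑ k ∈ Finset.Icc (a + 1) b, (W k - W (k - 1)) = W b - W a := by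
  obtain ⟨n, rfl⟩ : ∃ n : ℕ, b = a + n := ⟨(b - a).toNat, by omega⟩
  clear h
  induction n with
  | zero => simp
  | succ n ih =>
    have hcast : (a + ((n : ℕ) + 1 : ℕ) : ℤ) = (a + n) + 1 := by push_cast; ring
    have hins : Finset.Icc (a + 1) (a + n + 1) = insert (a + n + 1) (Finset.Icc (a + 1) (a + n)) := by
      ext k; simp only [Finset.mem_Icc, Finset.mem_insert]; omega
    rw [hcast, hins, Finset.sum_insert (by simp only [Finset.mem_Icc]; omega), ih]
    simp only [add_sub_cancel_right]
    abel

lemma Wform {m : ℕ} (S : Matrix (Fin m) (Fin m) ℂ) (hS : Sᴴ = S)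
    (a b : Matrix (Fin m) (Fin 1) ℂ) :
    (fromRows (S * a) (S * b))ᴴ * Jmat m * fromRows (S * a) (S * b)
      = aᴴ * (S * S) * b - bᴴ * (S * S) * a := by
  rw [quadJ]
  simp only [Matrix.conjTranspose_mul, hS, Matrix.mul_assoc]

/-- Under the standing hypotheses (Atkinson definiteness included),
if Φ(z,·) is the solution with Φ̂(z,k₀) = I_ρ(k₀)^{-1/2} J α*, β satisfies
ββ* = I, βJβ* = 0 (so Im(β₁β₂*) = 0), and z ∈ ℂ∖ℝ, then β̃Φ̂(z,ℓ) is invertible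
for every ℓ ≠ k₀; i.e. β̃Φ̂(·,ℓ) can be singular only for real spectral parameter. -/
theorem stmt16 {m : ℕ} (ρ : ℤ → Matrix (Fin m) (Fin m) ℂ)
    (A B : ℤ → Matrix (Fin m ⊕ Fin m) (Fin m ⊕ Fin m) ℂ)
    (hρ : ∀ k, (ρ k).PosDef) (hA : ∀ k, (A k).PosSemidef) (hB : ∀ k, (B k)ᴴ = B k)
    (z : ℂ) (hz : z.im ≠ 0) (k₀ ℓ : ℤ) (hℓ : ℓ ≠ k₀)
    (α β : Matrix (Fin m) (Fin m ⊕ Fin m) ℂ)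
    (hα1 : α * αᴴ = 1) (hα2 : α * Jmat m * αᴴ = 0)
    (hβ1 : β * βᴴ = 1) (hβ2 : β * Jmat m * βᴴ = 0)
    (Φ₁ Φ₂ : ℤ → Matrix (Fin m) (Fin m) ℂ)
    (hsol : ∀ k : ℤ, fromRows (ρ k * Φ₂ (k + 1)) (ρ (k - 1) * Φ₁ (k - 1))
        = (z • A k + B k) * fromRows (Φ₁ k) (Φ₂ k))
    (hinit : fromRows (Φ₁ k₀) (Φ₂ (k₀ + 1))
        = (fromBlocks (hρ k₀).posSemidef.sqrt 0 0 (hρ k₀).posSemidef.sqrt)⁻¹ *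
          (Jmat m * αᴴ))
    (hAtk : ∀ φ₁ φ₂ : ℤ → Matrix (Fin m) (Fin 1) ℂ,
        (∀ k : ℤ, fromRows (ρ k * φ₂ (k + 1)) (ρ (k - 1) * φ₁ (k - 1))
          = (z • A k + B k) * fromRows (φ₁ k) (φ₂ k)) →
        (¬ ∀ k, φ₁ k = 0 ∧ φ₂ k = 0) →
        (∑ k ∈ Finset.Icc (min k₀ ℓ + 1) (max k₀ ℓ),
          (fromRows (φ₁ k) (φ₂ k))ᴴ * A k * fromRows (φ₁ k) (φ₂ k)).PosDef) :
    IsUnit (β * fromBlocks (hρ ℓ).posSemidef.sqrt 0 0 (hρ ℓ).posSemidef.sqrt *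
      fromRows (Φ₁ ℓ) (Φ₂ (ℓ + 1))) := by
  by_contra hcon
  set Sl := (hρ ℓ).posSemidef.sqrt with hSl
  set S0 := (hρ k₀).posSemidef.sqrt with hS0
  have hSlherm : Slᴴ = Sl := psd_sqrt_herm (hρ ℓ).posSemidef
  have hS0herm : S0ᴴ = S0 := psd_sqrt_herm (hρ k₀).posSemidef
  have hSlsq : Sl * Sl = ρ ℓ := psd_sqrt_mul_self (hρ ℓ).posSemidef
  have hS0sq : S0 * S0 = ρ k₀ := psd_sqrt_mul_self (hρ k₀).posSemidef
  -- extract a null vector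
  have hdet : (β * fromBlocks Sl 0 0 Sl * fromRows (Φ₁ ℓ) (Φ₂ (ℓ + 1))).det = 0 := by
    by_contra hd
    exact hcon ((Matrix.isUnit_iff_isUnit_det _).mpr (isUnit_iff_ne_zero.mpr hd))
  obtain ⟨v, hvne, hvmul⟩ := (Matrix.exists_mulVec_eq_zero_iff).mpr hdet
  set V : Matrix (Fin m) (Fin 1) ℂ := Matrix.of (fun i _ => v i) with hVdef
  have hV0 : V ≠ 0 := by
    intro h
    apply hvne
    funext i
    have := congrFun (congrFun h i) 0
    simpa [hVdef] using this
  have hMV : β * fromBlocks Sl 0 0 Sl * fromRows (Φ₁ ℓ) (Φ₂ (ℓ + 1)) * V = 0 := by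
    ext i j
    have := congrFun hvmul i
    simpa [Matrix.mul_apply, Matrix.mulVec, dotProduct, hVdef] using this
  set φ₁ : ℤ → Matrix (Fin m) (Fin 1) ℂ := fun k => Φ₁ k * V with hφ₁
  set φ₂ : ℤ → Matrix (Fin m) (Fin 1) ℂ := fun k => Φ₂ k * V with hφ₂
  have hsol' : ∀ k : ℤ, fromRows (ρ k * φ₂ (k + 1)) (ρ (k - 1) * φ₁ (k - 1))
      = (z • A k + B k) * fromRows (φ₁ k) (φ₂ k) := by
    intro k
    have := congrArg (· * V) (hsol k)
    simpa [hφ₁, hφ₂, fromRows_mul, Matrix.mul_assoc] using this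
  -- D₀ is invertible
  have hdet0 : IsUnit (fromBlocks S0 0 0 S0 : Matrix (Fin m ⊕ Fin m) (Fin m ⊕ Fin m) ℂ).det := by
    have h1 : (fromBlocks S0 0 0 S0 : Matrix (Fin m ⊕ Fin m) (Fin m ⊕ Fin m) ℂ).det
        = S0.det * S0.det := Matrix.det_fromBlocks_zero₂₁ _ _ _
    have h2 : S0.det * S0.det = (ρ k₀).det := by rw [← Matrix.det_mul, hS0sq]
    have h3 : (ρ k₀).det ≠ 0 := (hρ k₀).det_pos.ne'
    rw [h1]
    exact isUnit_iff_ne_zero.mpr (fun h => h3 (by rw [← h2, h]))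
  -- nontriviality
  have hnt : ¬ ∀ k, φ₁ k = 0 ∧ φ₂ k = 0 := by
    intro hall
    have h0 : fromRows (Φ₁ k₀) (Φ₂ (k₀ + 1)) * V = 0 := by
      rw [fromRows_mul]
      have := (hall k₀).1
      have h2 := (hall (k₀ + 1)).2
      simp only [hφ₁, hφ₂] at this h2
      rw [this, h2, fromRows_zero]
    rw [hinit, Matrix.mul_assoc] at h0
    have h1 : Jmat m * αᴴ * V = 0 := by
      have := congrArg (fun X => fromBlocks S0 0 0 S0 * X) h0
      simpa [Matrix.mul_nonsing_inv_cancel_left _ _ hdet0] using this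
    have h2 : αᴴ * V = 0 := by
      rw [Matrix.mul_assoc] at h1
      have h2' := congrArg (fun X => Jmat m * X) h1
      simp only [← Matrix.mul_assoc, Jmat_mul_Jmat, Matrix.mul_zero] at h2'
      simpa using h2'
    have h3 : V = 0 := by
      have : α * (αᴴ * V) = 0 := by rw [h2, Matrix.mul_zero]
      rwa [← Matrix.mul_assoc, hα1, Matrix.one_mul] at this
    exact hV0 h3
  have hPD := hAtk φ₁ φ₂ hsol' hnt
  -- the Wronskian-type quantity
  set W : ℤ → Matrix (Fin 1) (Fin 1) ℂ :=
    fun k => (φ₁ k)ᴴ * ρ k * φ₂ (k + 1) - (φ₂ (k + 1))ᴴ * ρ k * φ₁ k with hW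
  -- key Lagrange identity
  have key : ∀ k : ℤ, (z - star z) •
      ((fromRows (φ₁ k) (φ₂ k))ᴴ * A k * fromRows (φ₁ k) (φ₂ k)) = W k - W (k - 1) := by
    intro k
    set ψ := fromRows (φ₁ k) (φ₂ k) with hψ
    set u := fromRows (ρ k * φ₂ (k + 1)) (ρ (k - 1) * φ₁ (k - 1)) with hu
    have husol : u = (z • A k + B k) * ψ := hsol' k
    have e1 : ψᴴ * u - uᴴ * ψ = (z - star z) • (ψᴴ * A k * ψ) := by
      have huh : uᴴ = ψᴴ * (star z • A k + B k) := by
        rw [husol, Matrix.conjTranspose_mul, conjTranspose_add, Matrix.conjTranspose_smul,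
          (hA k).1, hB k]
      rw [huh, husol, Matrix.mul_assoc, ← Matrix.mul_sub, ← Matrix.sub_mul,
        add_sub_add_right_eq_sub, ← sub_smul, Matrix.smul_mul, Matrix.mul_smul,
        Matrix.mul_assoc]
    have e2 : ψᴴ * u - uᴴ * ψ = W k - W (k - 1) := by
      rw [hψ, hu, conjTranspose_fromRows_eq_fromCols_conjTranspose,
        conjTranspose_fromRows_eq_fromCols_conjTranspose,
        fromCols_mul_fromRows, fromCols_mul_fromRows]
      simp only [hW]
      have hk : k - 1 + 1 = k := by ring
      rw [hk]
      simp only [Matrix.conjTranspose_mul, (hρ k).1.eq, (hρ (k - 1)).1.eq, Matrix.mul_assoc]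
      abel
    rw [← e1, e2]
  -- sum up
  have hminmax : min k₀ ℓ ≤ max k₀ ℓ := min_le_max
  have hsum : (z - star z) • (∑ k ∈ Finset.Icc (min k₀ ℓ + 1) (max k₀ ℓ),
      (fromRows (φ₁ k) (φ₂ k))ᴴ * A k * fromRows (φ₁ k) (φ₂ k))
      = W (max k₀ ℓ) - W (min k₀ ℓ) := by
    rw [Finset.smul_sum, Finset.sum_congr rfl (fun k _ => key k)]
    exact telW W _ _ hminmax
  -- boundary: W ℓ = 0
  have hWl : W ℓ = 0 := by
    have hx : β * fromRows (Sl * φ₁ ℓ) (Sl * φ₂ (ℓ + 1)) = 0 := by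
      have hfr : fromBlocks Sl 0 0 Sl * fromRows (φ₁ ℓ) (φ₂ (ℓ + 1))
          = fromRows (Sl * φ₁ ℓ) (Sl * φ₂ (ℓ + 1)) := by
        rw [fromBlocks_mul_fromRows]
        simp
      rw [← hfr]
      have := hMV
      rw [Matrix.mul_assoc, Matrix.mul_assoc] at this
      simpa [hφ₁, hφ₂, fromRows_mul, Matrix.mul_assoc] using this
    have hq := ker_quadJ β hβ1 hβ2 _ hx
    rw [Wform Sl hSlherm, hSlsq] at hq
    simp only [hW]
    exact hq
  -- boundary: W k₀ = 0
  have hWk0 : W k₀ = 0 := by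
    have hx0 : fromRows (S0 * φ₁ k₀) (S0 * φ₂ (k₀ + 1)) = Jmat m * (αᴴ * V) := by
      have hfr : fromBlocks S0 0 0 S0 * fromRows (φ₁ k₀) (φ₂ (k₀ + 1))
          = fromRows (S0 * φ₁ k₀) (S0 * φ₂ (k₀ + 1)) := by
        rw [fromBlocks_mul_fromRows]
        simp
      rw [← hfr]
      have h0 : fromRows (φ₁ k₀) (φ₂ (k₀ + 1)) = fromRows (Φ₁ k₀) (Φ₂ (k₀ + 1)) * V := by
        simp [hφ₁, hφ₂, fromRows_mul]
      rw [h0, hinit, Matrix.mul_assoc, Matrix.mul_nonsing_inv_cancel_left _ _ hdet0,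
        Matrix.mul_assoc]
    have hq : (fromRows (S0 * φ₁ k₀) (S0 * φ₂ (k₀ + 1)))ᴴ * Jmat m *
        fromRows (S0 * φ₁ k₀) (S0 * φ₂ (k₀ + 1)) = 0 := by
      rw [hx0]
      exact sandwichJ α hα2 V
    rw [Wform S0 hS0herm, hS0sq] at hq
    simp only [hW]
    exact hq
  -- conclude
  have hWmax : W (max k₀ ℓ) = 0 := by
    rcases max_choice k₀ ℓ with h | h <;> rw [h] <;> assumption
  have hWmin : W (min k₀ ℓ) = 0 := by
    rcases min_choice k₀ ℓ with h | h <;> rw [h] <;> assumption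
  rw [hWmax, hWmin, sub_zero] at hsum
  have hzz : z - star z ≠ 0 := by
    intro h
    apply hz
    have : star z = z := by linear_combination -h
    exact Complex.conj_eq_iff_im.mp this
  have hSum0 : (∑ k ∈ Finset.Icc (min k₀ ℓ + 1) (max k₀ ℓ),
      (fromRows (φ₁ k) (φ₂ k))ᴴ * A k * fromRows (φ₁ k) (φ₂ k)) = 0 :=
    (smul_eq_zero.mp hsum).resolve_left hzz
  rw [hSum0] at hPD
  have hone : (fun _ : Fin 1 => (1 : ℂ)) ≠ 0 := by
    intro h
    have := congrFun h 0
    simp at this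
  have := hPD.2 (x := Finsupp.single (0 : Fin 1) (1 : ℂ)) (by simp)
  simp at this
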